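/- For every ordinal α, for every t ∈ (0,1] the intersection X_α ∩ L_t is nonempty, and for every t ∈ [0,1) the intersection X_α ∩ R_t is nonempty. -/

import Mathlib

open Set Topology

noncomputable section

/-- A set is an `Fσ` set if it is a countable union of closed sets. -/
def IsFSigma {X : Type*} [TopologicalSpace X] (s : Set X) : Prop :=
  ∃ F : ℕ → Set X, (∀ n, IsClosed (F n)) ∧ s = ⋃ n, F n

/-- A topological space is an `F`-space if any two disjoint open `Fσ` subsets
have disjoint closures. -/
def IsFSpace (X : Type*) [TopologicalSpace X] : Prop :=
  ∀ s t : Set X, IsOpen s → IsOpen t → IsFSigma s → IsFSigma t → Disjoint s t →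
    Disjoint (closure s) (closure t)

/-- `𝐒 = ℕ × [0,1]²` where `ℕ` is discrete and `[0,1]` is the unit interval. -/
abbrev bS : Type := ℕ × (unitInterval × unitInterval)

/-- `βπ : β𝐒 → βℕ`, the Stone–Čech extension of the projection `π(n,x,y) = n`. -/
def betaPi : StoneCech bS → StoneCech ℕ :=
  stoneCechExtend (continuous_stoneCechUnit.comp continuous_fst)

/-- `βf : β𝐒 → [0,1]`, the Stone–Čech extension of `f(n,x,y) = x`. -/
def betaF : StoneCech bS → unitInterval :=
  stoneCechExtend (continuous_fst.comp continuous_snd)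

/-- `S_u = βπ⁻¹(u)`, as a subset of `β𝐒` (carrying the subspace topology). -/
def Su (u : StoneCech ℕ) : Set (StoneCech bS) := betaPi ⁻¹' {u}

/-- `f_u : S_u → [0,1]`, the restriction of `βf` to `S_u`. -/
def fu (u : StoneCech ℕ) : (Su u) → unitInterval := fun z => betaF z.1

/-- `L_t = f_u⁻¹(t) ∩ cl_{S_u} f_u⁻¹([0,t))`. -/
def Lset (u : StoneCech ℕ) (t : unitInterval) : Set (Su u) :=
  fu u ⁻¹' {t} ∩ closure (fu u ⁻¹' (Set.Ico 0 t))

/-- `R_t = f_u⁻¹(t) ∩ cl_{S_u} f_u⁻¹((t,1])`. -/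
def Rset (u : StoneCech ℕ) (t : unitInterval) : Set (Su u) :=
  fu u ⁻¹' {t} ∩ closure (fu u ⁻¹' (Set.Ioc t 1))

/-- The rectangle `P_{s,r} = S_u ∩ cl_{β𝐒}(ℕ × [s,r] × I)`, viewed as a subset of `S_u`. -/
def Pset (u : StoneCech ℕ) (s r : unitInterval) : Set (Su u) :=
  Subtype.val ⁻¹' closure (stoneCechUnit '' {p : bS | p.2.1 ∈ Set.Icc s r})

/-- `L_{s,t} = cl_{S_u}(⋃_{s<r<t} P_{s,r})`. -/
def Lst (u : StoneCech ℕ) (s t : unitInterval) : Set (Su u) :=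
  closure (⋃ r ∈ Set.Ioo s t, Pset u s r)

/-- The interior of `B` in the subspace `A`, viewed as a subset of the ambient space. -/
def relInt {Y : Type*} [TopologicalSpace Y] (A B : Set Y) : Set Y :=
  Subtype.val '' interior ((Subtype.val : A → Y) ⁻¹' B)

/-- The transfinite sequence `X_α ⊆ S_u`: `X_0 = S_u`,
`X_{α+1} = X_α \ ⋃_{t} Int_{X_α}(X_α ∩ f_u⁻¹(t))`, and `X_λ = ⋂_{β<λ} X_β` at limits. -/
def Xseq (u : StoneCech ℕ) : Ordinal → Set (Su u) := fun α =>
  Ordinal.limitRecOn α Set.univ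
    (fun _ Xa => Xa \ ⋃ t : unitInterval, relInt Xa (Xa ∩ fu u ⁻¹' {t}))
    (fun o _ ih => ⋂ (β : {β : Ordinal // β < o}), ih β.1 β.2)

/-- The bottom line `B_u = S_u ∩ cl_{β𝐒}(ℕ × I × {0})`, viewed as a subset of `S_u`. -/
def Bu (u : StoneCech ℕ) : Set (Su u) :=
  Subtype.val ⁻¹' closure (stoneCechUnit '' {p : bS | p.2.2 = 0})

/-- The top line `T_u = S_u ∩ cl_{β𝐒}(ℕ × I × {1})`, viewed as a subset of `S_u`. -/
def Tu (u : StoneCech ℕ) : Set (Su u) :=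
  Subtype.val ⁻¹' closure (stoneCechUnit '' {p : bS | p.2.2 = 1})

/-!
If `f_u` maps `X_α` onto `I` and `t > 0`, then, `f_u` being a closed map, the image of
`cl(X_α ∩ f_u⁻¹[0,t))` is a closed set containing `[0,t)`, so it contains a point `z` with
`f_u z = t`. Being a limit of points of `X_α` in other fibres, `z` is not interior to its fibre
in `X_α`, so `z ∈ X_{α+1} ∩ L_t`; symmetrically for `R_t`. In turn, meeting all `L_t` and `R_t`
makes `f_u` map `X_{α+1}` onto `I`, so the induction runs. At `α = 0`, `f_u(S_u)` is compact and
meets every `[s,r]`, hence is all of `I`; limit stages follow from compactness.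
-/

open Filter Order

lemma notMem_relInt_of_mem_closure_diff {Y : Type*} [TopologicalSpace Y] {A B : Set Y} {z : Y}
    (hz : z ∈ closure (A \ B)) : z ∉ relInt A B := by
  rintro ⟨w, hw, rfl⟩
  rw [mem_interior_iff_mem_nhds, nhds_induced, mem_comap] at hw
  obtain ⟨U, hU, hUB⟩ := hw
  obtain ⟨y, hyU, hyA, hyB⟩ := mem_closure_iff_nhds.mp hz U hU
  exact hyB (hUB (show (⟨y, hyA⟩ : A) ∈ Subtype.val ⁻¹' U from hyU))

lemma IsClosed.diff_iUnion_relInt {Y ι : Type*} [TopologicalSpace Y] {A : Set Y}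
    (hA : IsClosed A) (B : ι → Set Y) : IsClosed (A \ ⋃ i, relInt A (B i)) := by
  have hopen : IsOpen (⋃ i, interior ((Subtype.val : A → Y) ⁻¹' B i)) :=
    isOpen_iUnion fun _ => isOpen_interior
  simp only [relInt, ← image_iUnion, ← image_val_compl]
  exact hA.isClosedEmbedding_subtypeVal.isClosedMap _ hopen.isClosed_compl

section Xseq

variable (u : StoneCech ℕ)

lemma continuous_betaF : Continuous betaF := continuous_stoneCechExtend _

lemma betaF_stoneCechUnit (p : bS) : betaF (stoneCechUnit p) = p.2.1 :=
  congrFun (stoneCechExtend_extends _) p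

lemma continuous_fu : Continuous (fu u) :=
  continuous_betaF.comp continuous_subtype_val

lemma isClosed_Lset (t : unitInterval) : IsClosed (Lset u t) :=
  (isClosed_singleton.preimage (continuous_fu u)).inter isClosed_closure

lemma isClosed_Rset (t : unitInterval) : IsClosed (Rset u t) :=
  (isClosed_singleton.preimage (continuous_fu u)).inter isClosed_closure

lemma mapsTo_fu_Pset (s r : unitInterval) : MapsTo (fu u) (Pset u s r) (Icc s r) := by
  have hmaps : MapsTo betaF (stoneCechUnit '' {p : bS | p.2.1 ∈ Icc s r}) (Icc s r) := by
    rintro _ ⟨p, hp, rfl⟩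
    rwa [betaF_stoneCechUnit]
  exact fun x hx =>
    isClosed_Icc.closure_subset (map_mem_closure (f := betaF) continuous_betaF hx hmaps)

lemma range_fu [CompactSpace (Su u)] (hP : ∀ s r : unitInterval, s < r → (Pset u s r).Nonempty) :
    range (fu u) = univ := by
  have hdense : Dense (range (fu u)) := dense_of_exists_between fun a b hab => by
    obtain ⟨s, has, hsb⟩ := exists_between hab
    obtain ⟨r, hsr, hrb⟩ := exists_between hsb
    obtain ⟨x, hx⟩ := hP s r hsr
    have hfx := mapsTo_fu_Pset u s r hx
    exact ⟨fu u x, mem_range_self x, has.trans_le hfx.1, hfx.2.trans_lt hrb⟩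
  rw [← hdense.closure_eq, (isCompact_range (continuous_fu u)).isClosed.closure_eq]

lemma Xseq_zero : Xseq u 0 = univ :=
  Ordinal.limitRecOn_zero _ _ _

lemma Xseq_succ (α : Ordinal) :
    Xseq u (α + 1) = Xseq u α \ ⋃ t, relInt (Xseq u α) (Xseq u α ∩ fu u ⁻¹' {t}) :=
  Ordinal.limitRecOn_add_one _ _ _ _

lemma Xseq_limit {o : Ordinal} (ho : IsSuccLimit o) :
    Xseq u o = ⋂ β : {β : Ordinal // β < o}, Xseq u β :=
  Ordinal.limitRecOn_limit _ _ _ _ ho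

lemma isClosed_Xseq (α : Ordinal) : IsClosed (Xseq u α) := by
  induction α using Ordinal.limitRecOn with
  | zero => simp only [Xseq_zero, isClosed_univ]
  | add_one α ih => rw [Xseq_succ]; exact ih.diff_iUnion_relInt _
  | limit o ho ih => rw [Xseq_limit u ho]; exact isClosed_iInter fun β => ih β.1 β.2

lemma Xseq_antitone : Antitone (Xseq u) := by
  intro α β hαβ
  induction β using Ordinal.limitRecOn with
  | zero => rw [nonpos_iff_eq_zero.mp hαβ]
  | add_one β ih =>
    rcases hαβ.lt_or_eq with hlt | rfl
    · rw [Xseq_succ]; exact sdiff_subset.trans (ih (lt_add_one_iff.mp hlt))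
    · exact subset_rfl
  | limit o ho ih =>
    rcases hαβ.lt_or_eq with hlt | rfl
    · rw [Xseq_limit u ho]; exact iInter_subset (fun β : {β // β < o} => Xseq u β) ⟨α, hlt⟩
    · exact subset_rfl

variable {u}

lemma mem_Xseq_succ_of_mem_closure {α : Ordinal} {z : Su u} (hz : z ∈ Xseq u α)
    (hcl : z ∈ closure (Xseq u α \ fu u ⁻¹' {fu u z})) : z ∈ Xseq u (α + 1) := by
  rw [Xseq_succ]
  refine ⟨hz, mem_iUnion.not.mpr <| not_exists.mpr fun t => notMem_relInt_of_mem_closure_diff ?_⟩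
  rw [sdiff_self_inter]
  by_cases ht : fu u z = t
  · rwa [← ht]
  · exact subset_closure ⟨hz, ht⟩

lemma exists_mem_Xseq_succ [CompactSpace (Su u)] {α : Ordinal}
    (himg : fu u '' Xseq u α = univ) {t : unitInterval} {J : Set unitInterval}
    (htJ : t ∉ J) (ht : t ∈ closure J) :
    ∃ z ∈ Xseq u (α + 1), fu u z = t ∧ z ∈ closure (fu u ⁻¹' J) := by
  set S := Xseq u α ∩ fu u ⁻¹' J
  obtain ⟨z, hzS, rfl⟩ : t ∈ fu u '' closure S := by
    rwa [← (continuous_fu u).isClosedMap.closure_image_eq_of_continuous (continuous_fu u),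
      image_inter_preimage, himg, univ_inter]
  have hSdiff : S ⊆ Xseq u α \ fu u ⁻¹' {fu u z} :=
    fun x hx => ⟨hx.1, fun hxz => htJ (hxz ▸ hx.2)⟩
  have hzX : z ∈ Xseq u α := (isClosed_Xseq u α).closure_subset (closure_mono inter_subset_left hzS)
  exact ⟨z, mem_Xseq_succ_of_mem_closure hzX (closure_mono hSdiff hzS), rfl,
    closure_mono inter_subset_right hzS⟩

variable (u) in
def MeetsLR (X : Set (Su u)) : Prop :=
  (∀ t : unitInterval, 0 < t → (X ∩ Lset u t).Nonempty) ∧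
    (∀ t : unitInterval, t < 1 → (X ∩ Rset u t).Nonempty)

lemma MeetsLR.mono {X Y : Set (Su u)} (h : MeetsLR u X) (hXY : X ⊆ Y) : MeetsLR u Y :=
  ⟨fun t ht => (h.1 t ht).mono (inter_subset_inter_left _ hXY),
    fun t ht => (h.2 t ht).mono (inter_subset_inter_left _ hXY)⟩

lemma MeetsLR.image_fu_eq_univ {X : Set (Su u)} (h : MeetsLR u X) : fu u '' X = univ := by
  refine eq_univ_of_forall fun t => ?_
  rcases (unitInterval.nonneg' : 0 ≤ t).eq_or_lt with rfl | ht
  · obtain ⟨z, hzX, hzt, -⟩ := h.2 0 zero_lt_one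
    exact ⟨z, hzX, hzt⟩
  · obtain ⟨z, hzX, hzt, -⟩ := h.1 t ht
    exact ⟨z, hzX, hzt⟩

lemma meetsLR_Xseq_succ [CompactSpace (Su u)] {α : Ordinal} (himg : fu u '' Xseq u α = univ) :
    MeetsLR u (Xseq u (α + 1)) := by
  constructor
  · intro t ht
    obtain ⟨z, hzX, hzt, hcl⟩ := exists_mem_Xseq_succ himg (J := Ico 0 t) (fun h => h.2.false)
      (by rw [closure_Ico ht.ne]; exact right_mem_Icc.mpr ht.le)
    exact ⟨z, hzX, hzt, hcl⟩
  · intro t ht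
    obtain ⟨z, hzX, hzt, hcl⟩ := exists_mem_Xseq_succ himg (J := Ioc t 1) (fun h => h.1.false)
      (by rw [closure_Ioc ht.ne]; exact left_mem_Icc.mpr ht.le)
    exact ⟨z, hzX, hzt, hcl⟩

lemma Xseq_limit_inter_nonempty [CompactSpace (Su u)] {o : Ordinal} (ho : IsSuccLimit o)
    {C : Set (Su u)} (hC : IsClosed C) (h : ∀ β < o, (Xseq u β ∩ C).Nonempty) :
    (Xseq u o ∩ C).Nonempty := by
  have : Nonempty {β : Ordinal // β < o} := ⟨⟨0, ho.bot_lt⟩⟩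
  rw [Xseq_limit u ho, iInter_inter]
  refine IsCompact.nonempty_iInter_of_directed_nonempty_isCompact_isClosed _ ?_
    (fun β => h β.1 β.2) (fun β => ((isClosed_Xseq u β).inter hC).isCompact)
    (fun β => (isClosed_Xseq u β).inter hC)
  intro β γ
  obtain hβγ | hγβ := le_total β.1 γ.1
  · exact ⟨γ, inter_subset_inter_left _ (Xseq_antitone u hβγ), subset_rfl⟩
  · exact ⟨β, subset_rfl, inter_subset_inter_left _ (Xseq_antitone u hγβ)⟩

lemma meetsLR_Xseq_limit [CompactSpace (Su u)] {o : Ordinal} (ho : IsSuccLimit o)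
    (h : ∀ β < o, MeetsLR u (Xseq u β)) : MeetsLR u (Xseq u o) :=
  ⟨fun t ht => Xseq_limit_inter_nonempty ho (isClosed_Lset u t) fun β hβ => (h β hβ).1 t ht,
    fun t ht => Xseq_limit_inter_nonempty ho (isClosed_Rset u t) fun β hβ => (h β hβ).2 t ht⟩

end Xseq

theorem Xseq_meets_Lset_Rset_general (u : StoneCech ℕ)
    (hcomp : IsCompact (Su u))
    (hP : ∀ s r : unitInterval, s < r → IsConnected (Pset u s r)) :
    ∀ α : Ordinal,
      (∀ t : unitInterval, 0 < t → (Xseq u α ∩ Lset u t).Nonempty) ∧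
      (∀ t : unitInterval, t < 1 → (Xseq u α ∩ Rset u t).Nonempty) := by
  have : CompactSpace (Su u) := isCompact_iff_compactSpace.mp hcomp
  have himg : fu u '' Xseq u 0 = univ := by
    rw [Xseq_zero, image_univ, range_fu u fun s r h => (hP s r h).nonempty]
  suffices ∀ α, MeetsLR u (Xseq u α) from this
  intro α
  induction α using Ordinal.limitRecOn with
  | zero => exact (meetsLR_Xseq_succ himg).mono (Xseq_antitone u zero_le)
  | add_one α ih => exact meetsLR_Xseq_succ ih.image_fu_eq_univ
  | limit o ho ih => exact meetsLR_Xseq_limit ho ih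

/-- For every ordinal `α`, `X_α` meets every `L_t` (`t ∈ (0,1]`) and every `R_t`
(`t ∈ [0,1)`). -/
theorem Xseq_meets_Lset_Rset (u : StoneCech ℕ)
    (hu : ∀ n : ℕ, u ≠ stoneCechUnit n)
    (hne : (Su u).Nonempty) (hcomp : IsCompact (Su u)) (hconn : IsConnected (Su u))
    (hFsp : IsFSpace (Su u))
    (hP : ∀ s r : unitInterval, s < r → IsConnected (Pset u s r)) :
    ∀ α : Ordinal,
      (∀ t : unitInterval, 0 < t → (Xseq u α ∩ Lset u t).Nonempty) ∧
      (∀ t : unitInterval, t < 1 → (Xseq u α ∩ Rset u t).Nonempty) :=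
  Xseq_meets_Lset_Rset_general u hcomp hP

end
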